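/- Let n ≥ 1 and d : Fin n → ℕ with d j ≥ 1 for every j, set S = ∑ j, (d j − 1), and let x : Fin (S + 1) → ℂ be injective. For each l, define ψ_l ∈ EuclideanSpace ℂ ((j : Fin n) → Fin (d j)) by ψ_l i = (x l) ^ (∑ j, (i j : ℕ)); each ψ_l is fully product (ψ_l i = ∏ j, (x l)^{(i j : ℕ)}). Then the span of {ψ_l : l : Fin (S+1)} equals the span of the states {𝔊_n^k : 0 ≤ k ≤ S}. -/

import Mathlib

/-! The vector `i ↦ c ^ (∑ j, i j)` is `∑ₖ cᵏ 𝔊ₙᵏ`, since `𝔊ₙᵏ` is the indicator of the level set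
`∑ j, i j = k` and every level lies in `0, …, S`. Hence `(ψ_l)` is the image of `(𝔊ₙᵏ)` under the
Vandermonde matrix of `x`, which is invertible because the nodes `x l` are distinct. -/

/-- The unnormalized multipartite state `𝔊_n^k`, the uniform superposition of all
basis vectors `|i₁⋯iₙ⟩` with `i₁ + ⋯ + iₙ = k`. -/
noncomputable def gFrak (n : ℕ) (d : Fin n → ℕ) (k : ℕ) :
    EuclideanSpace ℂ ((j : Fin n) → Fin (d j)) :=
  WithLp.toLp 2 (fun (i : (j : Fin n) → Fin (d j)) => if (∑ j, ((i j : ℕ))) = k then 1 else 0)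

open Submodule

section ChangeOfFamily

variable {ι R M : Type*} [Fintype ι] [CommRing R] [AddCommGroup M] [Module R M]

theorem span_range_le_of_eq_sum_smul {A : Matrix ι ι R} {v w : ι → M}
    (h : ∀ i, v i = ∑ j, A i j • w j) : span R (Set.range v) ≤ span R (Set.range w) := by
  rw [span_le]
  rintro _ ⟨i, rfl⟩
  rw [h i]
  exact sum_mem fun j _ => smul_mem _ _ (subset_span ⟨j, rfl⟩)

theorem span_range_eq_of_eq_sum_smul [DecidableEq ι] {A : Matrix ι ι R} (hA : IsUnit A.det)
    {v w : ι → M} (h : ∀ i, v i = ∑ j, A i j • w j) :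
    span R (Set.range v) = span R (Set.range w) := by
  have hw : ∀ i, w i = ∑ j, A⁻¹ i j • v j := by
    intro i
    simp_rw [h, Finset.smul_sum, smul_smul]
    rw [Finset.sum_comm]
    simp_rw [← Finset.sum_smul, ← Matrix.mul_apply, Matrix.nonsing_inv_mul A hA, Matrix.one_apply,
      ite_smul, one_smul, zero_smul, Finset.sum_ite_eq, Finset.mem_univ, if_true]
  exact le_antisymm (span_range_le_of_eq_sum_smul h) (span_range_le_of_eq_sum_smul hw)

end ChangeOfFamily

section GFrak

variable {n : ℕ} {d : Fin n → ℕ}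

theorem sum_val_le_sum_pred (i : (j : Fin n) → Fin (d j)) :
    ∑ j, (i j : ℕ) ≤ ∑ j, (d j - 1) :=
  Finset.sum_le_sum fun j _ => Nat.le_pred_of_lt (i j).isLt

theorem toLp_pow_sum_eq_sum_smul_gFrak (c : ℂ) :
    WithLp.toLp 2 (fun i : (j : Fin n) → Fin (d j) => c ^ ∑ j, (i j : ℕ)) =
      ∑ k : Fin (∑ j, (d j - 1) + 1), c ^ (k : ℕ) • gFrak n d k := by
  ext i
  have hk : ∑ j, (i j : ℕ) < ∑ j, (d j - 1) + 1 := Nat.lt_succ_of_le (sum_val_le_sum_pred i)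
  simp only [WithLp.ofLp_sum, Finset.sum_apply, PiLp.smul_apply, gFrak, smul_eq_mul, mul_ite,
    mul_one, mul_zero]
  have hlevel (k : Fin (∑ j, (d j - 1) + 1)) : ∑ j, (i j : ℕ) = k ↔ ⟨_, hk⟩ = k :=
    ⟨fun h => Fin.ext h, fun h => h ▸ rfl⟩
  simp only [hlevel, Finset.sum_ite_eq, Finset.mem_univ, if_true]

end GFrak

theorem span_nUPB_eq_span_gFrak_general (n : ℕ) (d : Fin n → ℕ)
    (S : ℕ) (hS : S = ∑ j, (d j - 1))
    (x : Fin (S + 1) → ℂ) (hx : Function.Injective x)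
    (ψ : Fin (S + 1) → EuclideanSpace ℂ ((j : Fin n) → Fin (d j)))
    (hψ : ∀ l i, ψ l i = (x l) ^ (∑ j, ((i j : ℕ)))) :
    (∀ l i, ψ l i = ∏ j, (x l) ^ ((i j : ℕ))) ∧
    Submodule.span ℂ (Set.range ψ) =
      Submodule.span ℂ {v | ∃ k ≤ S, v = gFrak n d k} := by
  refine ⟨fun l i => by rw [hψ, Finset.prod_pow_eq_pow_sum], ?_⟩
  subst hS
  have hψ_sum : ∀ l, ψ l = ∑ k, Matrix.vandermonde x l k • gFrak n d k := fun l => by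
    simp only [Matrix.vandermonde_apply]
    rw [← toLp_pow_sum_eq_sum_smul_gFrak]
    ext i
    exact hψ l i
  have hlevels : {v | ∃ k ≤ ∑ j, (d j - 1), v = gFrak n d k} =
      Set.range fun k : Fin (∑ j, (d j - 1) + 1) => gFrak n d k := by
    ext v
    simp only [Set.mem_ofPred_eq, Set.mem_range, Fin.exists_iff, Nat.lt_succ_iff, eq_comm,
      exists_prop]
  rw [hlevels]
  exact span_range_eq_of_eq_sum_smul
    (isUnit_iff_ne_zero.mpr (Matrix.det_vandermonde_ne_zero_iff.mpr hx)) hψ_sum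

/-- For injective `x : Fin (S+1) → ℂ`, where `S = ∑ j (d j − 1)`, the fully product
vectors `ψ_l i = (x l) ^ (∑ j, i j)` span the same subspace as the states `𝔊_n^k`,
`0 ≤ k ≤ S`. -/
theorem span_nUPB_eq_span_gFrak (n : ℕ) (hn : 1 ≤ n) (d : Fin n → ℕ)
    (hd : ∀ j, 1 ≤ d j) (S : ℕ) (hS : S = ∑ j, (d j - 1))
    (x : Fin (S + 1) → ℂ) (hx : Function.Injective x)
    (ψ : Fin (S + 1) → EuclideanSpace ℂ ((j : Fin n) → Fin (d j)))
    (hψ : ∀ l i, ψ l i = (x l) ^ (∑ j, ((i j : ℕ)))) :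
    (∀ l i, ψ l i = ∏ j, (x l) ^ ((i j : ℕ))) ∧
    Submodule.span ℂ (Set.range ψ) =
      Submodule.span ℂ {v | ∃ k ≤ S, v = gFrak n d k} :=
  span_nUPB_eq_span_gFrak_general n d S hS x hx ψ hψ
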